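/- arXiv:2512.02893 — 4 statements merged into one kernel-verified Lean document; each statement's English description precedes it below -/
import Mathlib

section
/- Let (Ω, 𝓕, ℙ) be a probability space. Consider the discrete-time closed-loop system x_{k+1} = f(x_k, u_k), y_k = g(x_k) + v_k, u_k = h(y_k), where f : X × U → X, g : X → Y with Y a normed additive group, and h : Y → U. Let v_k : Ω → Y for k = 0, …, T be noise maps and x_0 : Ω → X an initial-state map with x_0(ω) ∈ 𝒳_0 for every ω, and define the random trajectory recursively by x_{k+1}(ω) = f(x_k(ω), h(g(x_k(ω)) + v_k(ω))) for k < T. Let H : X → ℝ, and suppose the sets 𝒳_0, …, 𝒳_T ⊆ X satisfy: for every k < T, every x ∈ 𝒳_k, and every v ∈ Y with ‖v‖ ≤ H(x), f(x, h(g(x) + v)) ∈ 𝒳_{k+1}. If ℙ[{ω : ∀ k ∈ {0, …, T}, ‖v_k(ω)‖ ≤ H(x_k(ω))}] ≥ 1 − α, then ℙ[{ω : ∀ k ∈ {0, …, T}, x_k(ω) ∈ 𝒳_k}] ≥ 1 − α. -/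
open MeasureTheory

/-- Theorem 1 (High-Confidence Reachability Guarantee): if the noise bound `H` holds
trajectory-wide with probability at least `1 - α`, then the state lies in the worst-case
reachable sets at every time step with probability at least `1 - α`. -/
theorem high_confidence_reachability
    {Ω X U Y : Type*} [MeasurableSpace Ω] [NormedAddGroup Y]
    (ℙ : Measure Ω) [IsProbabilityMeasure ℙ]
    (T : ℕ)
    (f : X × U → X) (g : X → Y) (h : Y → U)
    (v : ℕ → Ω → Y)
    (x : ℕ → Ω → X)
    (𝒳 : ℕ → Set X)
    (hx0 : ∀ ω, x 0 ω ∈ 𝒳 0)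
    (hstep : ∀ k, k < T → ∀ ω, x (k + 1) ω = f (x k ω, h (g (x k ω) + v k ω)))
    (H : X → ℝ)
    (hreach : ∀ k, k < T → ∀ y ∈ 𝒳 k, ∀ w : Y,
      ‖w‖ ≤ H y → f (y, h (g y + w)) ∈ 𝒳 (k + 1))
    (α : ℝ)
    (hnoise : 1 - α ≤ (ℙ {ω | ∀ k, k ≤ T → ‖v k ω‖ ≤ H (x k ω)}).toReal) :
    1 - α ≤ (ℙ {ω | ∀ k, k ≤ T → x k ω ∈ 𝒳 k}).toReal := by
  refine le_trans hnoise (ENNReal.toReal_mono (measure_ne_top ℙ _) (measure_mono ?_))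
  intro ω hω k hk
  induction k with
  | zero => exact hx0 ω
  | succ n ih =>
    have hnT : n < T := hk
    rw [hstep n hnT ω]
    exact hreach n hnT _ (ih (le_of_lt hnT)) _ (hω n (le_of_lt hnT))
end

section
/- Let (Ω, ℙ) be a probability space and let W^1, …, W^{N+1} be exchangeable random trajectories, where each W^j = ((x^j_0, v^j_0), …, (x^j_T, v^j_T)) takes values in (X × Y)^{T+1} for a measurable space X and a normed additive group Y, and exchangeability means the joint law of (W^{σ(1)}, …, W^{σ(N+1)}) equals that of (W^1, …, W^{N+1}) for every permutation σ of {1, …, N+1}. Fix a measurable region S ⊆ X and define for each j the nonconformity score δ^j = max{‖v^j_k‖ : k ∈ {0, …, T}, x^j_k ∈ S} (with δ^j = 0 if the trajectory never visits S). Let α_i ∈ (0, 1), set r = ⌈(N+1)(1−α_i)⌉, suppose r ≤ N, and let η be the r-th smallest value among δ^1, …, δ^N. Then ℙ[∀ k ∈ {0, …, T}, x^{N+1}_k ∈ S → ‖v^{N+1}_k‖ ≤ η] ≥ 1 − α_i. -/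
open MeasureTheory

/-- The `r`-th order statistic (1-indexed: `r`-th smallest value) of `z 0, …, z (N-1)`. -/
noncomputable def orderStat {N : ℕ} (z : Fin N → ℝ) (r : ℕ) : ℝ :=
  ((List.ofFn z).insertionSort (· ≤ ·)).getD (r - 1) 0

/-!
The scores are a measurable function of the trajectories, so they are exchangeable too; hence
the event "fewer than `r` scores lie strictly below `δʲ`" has the same probability for every `j`.
At every `ω` it holds for at least `r` indices (the first `r` in sorted order), so summing over
`j` gives `(N + 1) ℙ(event for the fresh trajectory) ≥ r ≥ (N + 1)(1 - α)`. On that event fewer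
than `r` calibration scores lie below `δᴺ⁺¹`, so `δᴺ⁺¹ ≤ η`, and `δᴺ⁺¹` bounds the noise at
every visit of `S`.
-/

open Finset

section Ranks

variable {n : ℕ} {α : Type*} [LinearOrder α]

lemma card_filter_comp_perm_lt (z : Fin n → α) (σ : Equiv.Perm (Fin n)) (a : α) :
    #{i | z (σ i) < a} = #{i | z i < a} :=
  card_equiv σ (by simp)

lemma lt_card_filter_lt_iff_apply_sort_lt (z : Fin n → α) (j : Fin n) (a : α) :
    j < #{i | z i < a} ↔ z (Tuple.sort z j) < a := by
  rw [← card_filter_comp_perm_lt z (Tuple.sort z)]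
  exact Tuple.lt_card_lt_iff_apply_lt_of_monotone (Tuple.monotone_sort z)

lemma card_filter_lt_apply_sort_le (z : Fin n → α) (k : Fin n) :
    #{i | z i < z (Tuple.sort z k)} ≤ k :=
  not_lt.1 fun h => lt_irrefl _ ((lt_card_filter_lt_iff_apply_sort_lt z k _).1 h)

lemma le_card_filter_card_filter_lt_lt (z : Fin n → α) {r : ℕ} (hr : r ≤ n) :
    r ≤ #{j | #{i | z i < z j} < r} :=
  calc r = #(univ : Finset (Fin r)) := by simp
    _ ≤ _ := card_le_card_of_injOn _ (fun k _ => by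
      simpa using (card_filter_lt_apply_sort_le z (Fin.castLE hr k)).trans_lt k.isLt)
      ((Tuple.sort z).injective.comp (Fin.castLE_injective hr)).injOn

lemma insertionSort_ofFn_eq_ofFn_comp_sort (z : Fin n → α) :
    (List.ofFn z).insertionSort (· ≤ ·) = List.ofFn (z ∘ Tuple.sort z) :=
  List.Perm.eq_of_pairwise' (List.pairwise_insertionSort _ _)
    (Tuple.monotone_sort z).sortedLE_ofFn.pairwise
    ((List.perm_insertionSort _ _).trans ((Tuple.sort z).ofFn_comp_perm z).symm)

end Ranks

lemma orderStat_eq_apply_sort {N : ℕ} (z : Fin N → ℝ) {r : ℕ} (hr1 : 1 ≤ r) (hrN : r ≤ N) :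
    orderStat z r = z (Tuple.sort z ⟨r - 1, by omega⟩) := by
  simp [orderStat, insertionSort_ofFn_eq_ofFn_comp_sort, List.getD_eq_getElem?_getD,
    show r - 1 < N by omega]

lemma le_orderStat_of_card_filter_lt {N : ℕ} (z : Fin N → ℝ) {r : ℕ} {t : ℝ}
    (h : #{i | z i < t} < r) (hrN : r ≤ N) : t ≤ orderStat z r := by
  rw [orderStat_eq_apply_sort z (by omega) hrN, ← not_lt, ← lt_card_filter_lt_iff_apply_sort_lt,
    Fin.val_mk]
  omega

lemma card_filter_castSucc_le {n : ℕ} (p : Fin (n + 1) → Prop) [DecidablePred p] :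
    #{i : Fin n | p i.castSucc} ≤ #{i | p i} :=
  card_le_card_of_injOn Fin.castSucc (fun i hi => by simpa using hi)
    (Fin.castSucc_injective n).injOn

section Exchangeable

variable {Ω ι β γ : Type*} [MeasurableSpace Ω] [MeasurableSpace β] [MeasurableSpace γ]

def Exchangeable (μ : Measure Ω) (X : ι → Ω → β) : Prop :=
  ∀ σ : Equiv.Perm ι, μ.map (fun ω j => X (σ j) ω) = μ.map (fun ω j => X j ω)

lemma Exchangeable.comp {μ : Measure Ω} {X : ι → Ω → β} (hX : Exchangeable μ X)
    (hXm : ∀ j, Measurable (X j)) {g : β → γ} (hg : Measurable g) :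
    Exchangeable μ (fun j ω => g (X j ω)) := by
  intro σ
  have hG : Measurable fun (x : ι → β) j => g (x j) := by fun_prop
  calc μ.map (fun ω j => g (X (σ j) ω))
      = (μ.map fun ω j => X (σ j) ω).map fun x j => g (x j) :=
        (Measure.map_map hG (by fun_prop)).symm
    _ = (μ.map fun ω j => X j ω).map fun x j => g (x j) := by rw [hX σ]
    _ = μ.map (fun ω j => g (X j ω)) := Measure.map_map hG (by fun_prop)

end Exchangeable

lemma natCast_mul_measure_univ_le_sum {Ω ι : Type*} [MeasurableSpace Ω] [Fintype ι]
    (μ : Measure Ω) {A : ι → Set Ω} (hA : ∀ i, MeasurableSet (A i))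
    [∀ ω, DecidablePred (ω ∈ A ·)] {r : ℕ} (h : ∀ ω, r ≤ #{i | ω ∈ A i}) :
    r * μ Set.univ ≤ ∑ i, μ (A i) :=
  calc r * μ Set.univ = ∫⁻ _, (r : ENNReal) ∂μ := (lintegral_const _).symm
    _ ≤ ∫⁻ ω, ∑ i, (A i).indicator 1 ω ∂μ := lintegral_mono fun ω => by
        simpa [Set.indicator_apply] using h ω
    _ = ∑ i, μ (A i) := by
        rw [lintegral_finsetSum _ fun i _ => measurable_one.indicator (hA i)]
        simp only [lintegral_indicator_one (hA _)]

lemma measurableSet_card_filter_lt_lt {n : ℕ} (j : Fin n) (r : ℕ) :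
    MeasurableSet {x : Fin n → ℝ | #{i | x i < x j} < r} := by
  have : Measurable fun x : Fin n → ℝ => #{i | x i < x j} := by
    simp only [card_filter]
    exact Finset.measurable_sum _ fun i _ =>
      Measurable.ite (measurableSet_lt (measurable_pi_apply i) (measurable_pi_apply j))
        measurable_const measurable_const
  exact this (measurableSet_Iio (a := r))

lemma Exchangeable.natCast_le_mul_measure_card_filter_lt_lt {Ω : Type*} [MeasurableSpace Ω]
    {μ : Measure Ω} [IsProbabilityMeasure μ] {n : ℕ} {X : Fin n → Ω → ℝ}
    (hX : Exchangeable μ X) (hXm : ∀ j, Measurable (X j)) (k : Fin n) {r : ℕ} (hr : r ≤ n) :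
    (r : ENNReal) ≤ n * μ {ω | #{i | X i ω < X k ω} < r} := by
  have hD : Measurable fun ω j => X j ω := by fun_prop
  have hE : ∀ j, MeasurableSet {ω | #{i | X i ω < X j ω} < r} := fun j =>
    hD (measurableSet_card_filter_lt_lt j r)
  have hswap : ∀ j, {ω | #{i | X i ω < X j ω} < r} =
      (fun ω i => X (Equiv.swap j k i) ω) ⁻¹' {x | #{i | x i < x k} < r} := by
    intro j
    ext ω
    simp [card_filter_comp_perm_lt (fun i => X i ω)]
  have hsame : ∀ j, μ {ω | #{i | X i ω < X j ω} < r} = μ {ω | #{i | X i ω < X k ω} < r} := by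
    intro j
    rw [hswap, ← Measure.map_apply (by fun_prop) (measurableSet_card_filter_lt_lt k r), hX,
      Measure.map_apply hD (measurableSet_card_filter_lt_lt k r)]
    rfl
  calc (r : ENNReal) = r * μ Set.univ := by simp
    _ ≤ ∑ j, μ {ω | #{i | X i ω < X j ω} < r} :=
        natCast_mul_measure_univ_le_sum μ hE fun ω => le_card_filter_card_filter_lt_lt _ hr
    _ = n * μ {ω | #{i | X i ω < X k ω} < r} := by simp [hsame]

section RegionScore

variable {ι X Y : Type*} [NormedAddGroup Y]

noncomputable def regionScore (S : Set X) (w : ι → X × Y) : ℝ :=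
  sSup ((fun k => ‖(w k).2‖) '' {k | (w k).1 ∈ S})

lemma norm_le_regionScore [Finite ι] {S : Set X} {w : ι → X × Y} {k : ι} (hk : (w k).1 ∈ S) :
    ‖(w k).2‖ ≤ regionScore S w :=
  le_csSup ((Set.toFinite _).image _).bddAbove ⟨k, hk, rfl⟩

open Classical in
lemma regionScore_eq_iSup [Finite ι] (S : Set X) (w : ι → X × Y) :
    regionScore S w = ⨆ k, if (w k).1 ∈ S then ‖(w k).2‖ else 0 := by
  by_cases! hS : ∀ k, (w k).1 ∉ S
  · simp [regionScore, hS]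
  · obtain ⟨k₀, hk₀⟩ := hS
    have : Nonempty ι := ⟨k₀⟩
    refine le_antisymm (csSup_le ⟨_, k₀, hk₀, rfl⟩ ?_) (ciSup_le fun k => ?_)
    · rintro _ ⟨k, hk, rfl⟩
      exact le_ciSup_of_le (Set.finite_range _).bddAbove k (if_pos hk).ge
    · split_ifs with hk
      · exact norm_le_regionScore hk
      · exact (norm_nonneg _).trans (norm_le_regionScore hk₀)

lemma measurable_regionScore [Finite ι] [MeasurableSpace X] [MeasurableSpace Y]
    [OpensMeasurableSpace Y] {S : Set X} (hS : MeasurableSet S) :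
    Measurable (regionScore S : (ι → X × Y) → ℝ) := by
  classical
  simp_rw [funext (regionScore_eq_iSup S)]
  exact Measurable.iSup fun k =>
    Measurable.ite (hS.preimage (by fun_prop)) (by fun_prop) measurable_const

end RegionScore

theorem per_region_conformal_guarantee_general
    {Ω X Y : Type*} [MeasurableSpace Ω] [MeasurableSpace X]
    [NormedAddGroup Y] [MeasurableSpace Y] [OpensMeasurableSpace Y]
    (ℙ : Measure Ω) [IsProbabilityMeasure ℙ]
    (N T : ℕ)
    (W : Fin (N + 1) → Ω → (Fin (T + 1) → X × Y)) (hW : ∀ j, Measurable (W j))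
    (hexch : ∀ σ : Equiv.Perm (Fin (N + 1)),
      Measure.map (fun ω => fun j => W (σ j) ω) ℙ =
        Measure.map (fun ω => fun j => W j ω) ℙ)
    (S : Set X) (hS : MeasurableSet S)
    (δ : Fin (N + 1) → Ω → ℝ)
    (hδ : ∀ j ω, δ j ω =
      sSup ((fun k : Fin (T + 1) => ‖(W j ω k).2‖) '' {k | (W j ω k).1 ∈ S}))
    (αi : ℝ)
    (r : ℕ) (hr : r = ⌈((N : ℝ) + 1) * (1 - αi)⌉₊) (hrN : r ≤ N)
    (η : Ω → ℝ)
    (hη : ∀ ω, η ω = orderStat (fun j : Fin N => δ j.castSucc ω) r) :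
    1 - αi ≤
      (ℙ {ω | ∀ k : Fin (T + 1),
        (W (Fin.last N) ω k).1 ∈ S → ‖(W (Fin.last N) ω k).2‖ ≤ η ω}).toReal := by
  obtain rfl : δ = fun j ω => regionScore S (W j ω) := funext₂ hδ
  have hscore := measurable_regionScore (ι := Fin (T + 1)) (Y := Y) hS
  have hrank := (Exchangeable.comp hexch hW hscore).natCast_le_mul_measure_card_filter_lt_lt
      (fun j => hscore.comp (hW j)) (Fin.last N) (Nat.le_succ_of_le hrN)
  calc 1 - αi ≤ r / (N + 1) := by
        rw [le_div_iff₀ (by positivity), mul_comm, hr]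
        exact Nat.le_ceil _
    _ ≤ (ℙ {ω | #{i | regionScore S (W i ω) < regionScore S (W (Fin.last N) ω)} < r}).toReal := by
        rw [div_le_iff₀ (by positivity), mul_comm]
        have := ENNReal.toReal_mono (by finiteness) hrank
        rwa [ENNReal.toReal_mul, ENNReal.toReal_natCast, ENNReal.toReal_natCast, Nat.cast_succ]
          at this
    _ ≤ _ := by
        refine ENNReal.toReal_mono (measure_ne_top _ _) (measure_mono fun ω hω k hk => ?_)
        exact (norm_le_regionScore hk).trans <| (hη ω).symm ▸
          le_orderStat_of_card_filter_lt _ ((card_filter_castSucc_le _).trans_lt hω) hrN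

/-- Per-region conformal guarantee (Equation (4) of the paper): for `N + 1` exchangeable
random trajectories of states and noises, the conformal quantile `η` of the region-based
nonconformity scores (max noise norm over the time steps at which the trajectory visits
the region `S`, `0` if `S` is never visited) of the first `N` trajectories bounds, with
probability at least `1 - αi`, the perception error at every time step at which the fresh
trajectory visits `S`. -/
theorem per_region_conformal_guarantee
    {Ω X Y : Type*} [MeasurableSpace Ω] [MeasurableSpace X]
    [NormedAddGroup Y] [MeasurableSpace Y] [OpensMeasurableSpace Y]
    (ℙ : Measure Ω) [IsProbabilityMeasure ℙ]
    (N T : ℕ)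
    (W : Fin (N + 1) → Ω → (Fin (T + 1) → X × Y)) (hW : ∀ j, Measurable (W j))
    (hexch : ∀ σ : Equiv.Perm (Fin (N + 1)),
      Measure.map (fun ω => fun j => W (σ j) ω) ℙ =
        Measure.map (fun ω => fun j => W j ω) ℙ)
    (S : Set X) (hS : MeasurableSet S)
    (δ : Fin (N + 1) → Ω → ℝ)
    (hδ : ∀ j ω, δ j ω =
      sSup ((fun k : Fin (T + 1) => ‖(W j ω k).2‖) '' {k | (W j ω k).1 ∈ S}))
    (αi : ℝ) (hαi : αi ∈ Set.Ioo (0 : ℝ) 1)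
    (r : ℕ) (hr : r = ⌈((N : ℝ) + 1) * (1 - αi)⌉₊) (hrN : r ≤ N)
    (η : Ω → ℝ)
    (hη : ∀ ω, η ω = orderStat (fun j : Fin N => δ j.castSucc ω) r) :
    1 - αi ≤
      (ℙ {ω | ∀ k : Fin (T + 1),
        (W (Fin.last N) ω k).1 ∈ S → ‖(W (Fin.last N) ω k).2‖ ≤ η ω}).toReal :=
  per_region_conformal_guarantee_general ℙ N T W hW hexch S hS δ hδ αi r hr hrN η hη
end

section
/- Let D be a set, let K ≥ 1, and for each i ∈ {1, …, K} let p_i : D → ℝ be a function and [a_i, b_i] a closed interval with a_i ≤ b_i; let p̄ : D → ℝ be a reference function with interval [ā, b̄], ā ≤ b̄. Suppose reals ℓ_1, …, ℓ_K and u_1, …, u_K satisfy, for every i and every x ∈ D, ℓ_i ≤ (p_i(x) − p̄(x)) + (a_i − b̄) and (p_i(x) − p̄(x)) + (b_i − ā) ≤ u_i. Define L = ā + min(0, min_{i=1,…,K} ℓ_i) and U = b̄ + max(0, max_{i=1,…,K} u_i). Then for every i ∈ {1, …, K}, every x ∈ D, and every e ∈ [a_i, b_i], one has p̄(x) + L ≤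 p_i(x) + e ≤ p̄(x) + U; that is, the set {p_i(x) + e : e ∈ [a_i, b_i]} is contained in {p̄(x) + e' : e' ∈ [L, U]} for every x ∈ D. -/
/-- Validity of the Taylor Model Union Enclosure (Equation (12) of the paper): the
enclosure `(p̄, [L, U])` with inflated remainder interval contains each of the `K`
Taylor models `(p i, [a i, b i])` pointwise on the domain `D`. -/
theorem taylor_model_union_enclosure
    {D : Type*} (K : ℕ) (hK : 0 < K)
    (p : Fin K → D → ℝ) (a b : Fin K → ℝ) (hab : ∀ i, a i ≤ b i)
    (pbar : D → ℝ) (abar bbar : ℝ) (habar : abar ≤ bbar)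
    (ℓ u : Fin K → ℝ)
    (hℓ : ∀ (i : Fin K) (x : D), ℓ i ≤ (p i x - pbar x) + (a i - bbar))
    (hu : ∀ (i : Fin K) (x : D), (p i x - pbar x) + (b i - abar) ≤ u i)
    (L U : ℝ)
    (hL : L = abar +
      min 0 (Finset.univ.inf' (Finset.univ_nonempty_iff.mpr ⟨⟨0, hK⟩⟩) ℓ))
    (hU : U = bbar +
      max 0 (Finset.univ.sup' (Finset.univ_nonempty_iff.mpr ⟨⟨0, hK⟩⟩) u)) :
    ∀ (i : Fin K) (x : D) (e : ℝ), a i ≤ e → e ≤ b i →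
      pbar x + L ≤ p i x + e ∧ p i x + e ≤ pbar x + U := by
  intro i x e hae heb
  have hinf : Finset.univ.inf' (Finset.univ_nonempty_iff.mpr ⟨⟨0, hK⟩⟩) ℓ ≤ ℓ i :=
    Finset.inf'_le _ (Finset.mem_univ i)
  have hsup : u i ≤ Finset.univ.sup' (Finset.univ_nonempty_iff.mpr ⟨⟨0, hK⟩⟩) u :=
    Finset.le_sup' _ (Finset.mem_univ i)
  have h1 := hℓ i x
  have h2 := hu i x
  constructor
  · have : L ≤ abar + ((p i x - pbar x) + (a i - bbar)) := by
      rw [hL]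
      have := min_le_right (0:ℝ) (Finset.univ.inf' (Finset.univ_nonempty_iff.mpr ⟨⟨0, hK⟩⟩) ℓ)
      linarith
    nlinarith
  · have : bbar + ((p i x - pbar x) + (b i - abar)) ≤ U := by
      rw [hU]
      have := le_max_right (0:ℝ) (Finset.univ.sup' (Finset.univ_nonempty_iff.mpr ⟨⟨0, hK⟩⟩) u)
      linarith
    nlinarith
end

section
/- Let D be a set, f : D → ℝ a function, K ≥ 1, and for each i ∈ {1, …, K} let p_i : D → ℝ and [a_i, b_i] with a_i ≤ b_i; let p̄ : D → ℝ with [ā, b̄], ā ≤ b̄. Suppose reals ℓ_1, …, ℓ_K and u_1, …, u_K satisfy, for every i and every x ∈ D, ℓ_i ≤ (p_i(x) − p̄(x)) + (a_i − b̄) and (p_i(x) − p̄(x)) + (b_i − ā) ≤ u_i, and define L = ā + min(0, min_i ℓ_i) and U = b̄ + max(0, max_i u_i). If for some index i₀ the Taylor model (p_{i₀}, [a_{i₀}, b_{i₀}]) encloses f on D, i.e., p_{i₀}(x) + a_{i₀} ≤ f(x) ≤ p_{i₀}(x) + b_{i₀} for all x ∈ D, then the union enclosure (p̄, [L, U]) also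 encloses f on D: p̄(x) + L ≤ f(x) ≤ p̄(x) + U for all x ∈ D. -/
/-- Soundness of branch merging via the Taylor Model Union Enclosure: if one of the
`K` Taylor models `(p i₀, [a i₀, b i₀])` encloses a function `f` on the domain `D`, then
the union enclosure `(p̄, [L, U])` also encloses `f` on `D`. -/
theorem taylor_model_union_enclosure_sound
    {D : Type*} (f : D → ℝ) (K : ℕ) (hK : 0 < K)
    (p : Fin K → D → ℝ) (a b : Fin K → ℝ) (hab : ∀ i, a i ≤ b i)
    (pbar : D → ℝ) (abar bbar : ℝ) (habar : abar ≤ bbar)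
    (ℓ u : Fin K → ℝ)
    (hℓ : ∀ (i : Fin K) (x : D), ℓ i ≤ (p i x - pbar x) + (a i - bbar))
    (hu : ∀ (i : Fin K) (x : D), (p i x - pbar x) + (b i - abar) ≤ u i)
    (L U : ℝ)
    (hL : L = abar +
      min 0 (Finset.univ.inf' (Finset.univ_nonempty_iff.mpr ⟨⟨0, hK⟩⟩) ℓ))
    (hU : U = bbar +
      max 0 (Finset.univ.sup' (Finset.univ_nonempty_iff.mpr ⟨⟨0, hK⟩⟩) u))
    (i₀ : Fin K)
    (hencl : ∀ x : D, p i₀ x + a i₀ ≤ f x ∧ f x ≤ p i₀ x + b i₀) :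
    ∀ x : D, pbar x + L ≤ f x ∧ f x ≤ pbar x + U := by
  intro x
  obtain ⟨h1, h2⟩ := hencl x
  have hinf : Finset.univ.inf' (Finset.univ_nonempty_iff.mpr ⟨⟨0, hK⟩⟩) ℓ ≤ ℓ i₀ :=
    Finset.inf'_le _ (Finset.mem_univ i₀)
  have hsup : u i₀ ≤ Finset.univ.sup' (Finset.univ_nonempty_iff.mpr ⟨⟨0, hK⟩⟩) u :=
    Finset.le_sup' _ (Finset.mem_univ i₀)
  have hℓ0 := hℓ i₀ x
  have hu0 := hu i₀ x
  constructor
  · have : pbar x + L ≤ pbar x + abar + ℓ i₀ := by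
      rw [hL]
      have := min_le_right (0:ℝ) (Finset.univ.inf' (Finset.univ_nonempty_iff.mpr ⟨⟨0, hK⟩⟩) ℓ)
      linarith
    linarith
  · have : pbar x + bbar + u i₀ ≤ pbar x + U := by
      rw [hU]
      have := le_max_right (0:ℝ) (Finset.univ.sup' (Finset.univ_nonempty_iff.mpr ⟨⟨0, hK⟩⟩) u)
      linarith
    linarith
end
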